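/- If d ≡ 3 (mod 4) and s = sf(d+1) is the squarefree part of d+1, then the set of squared edge lengths of regular d-simplices with vertices in ℚ^d is exactly the square class 2s(ℚ^×)²: m occurs if and only if m = 2s q² for some q ∈ ℚ^×. -/

import Mathlib

/-!
Let `X` be the matrix with columns `v j - v 0`. For a regular simplex of squared edge `m` the
Gram matrix is `XᵀX = (m/2)(I + J)`, so `det X ^ 2 = (m/2)^d (d+1)`, and affine independence is
`det X ≠ 0`. For odd `d` this makes `m/2` a square times `d + 1 = s u²`, i.e. `m ∈ 2s(ℚ^×)²`.

Conversely, when `4 ∣ d + 1`, Lagrange's four-square theorem gives a quaternion matrix `M` with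
`MMᵀ = (d+1)I`, and block-diagonal copies of it a matrix of size `d + 1` with the same property.
A Householder reflection turns its first row into `(1, …, 1)`; its columns, first coordinate
dropped, are then `d + 1` points of `ℚ^d` at mutual squared distance `2(d+1)`, and scaling them by
`q/u` gives squared edge `2sq²`.
-/

/-- A regular `d`-simplex in `ℚⁿ` of squared edge length `m`. -/
def IsRegularSimplex (d n : ℕ) (m : ℚ) (v : Fin (d + 1) → Fin n → ℚ) : Prop :=
  AffineIndependent ℚ v ∧ ∀ i j, i ≠ j → ∑ k, (v i k - v j k) ^ 2 = m

open Matrix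
open scoped Kronecker

namespace Matrix

section CommRing

variable {R : Type*} [CommRing R]

/-- Its rows are the coordinates of `q, iq, jq, kq` for the quaternion `q = a + bi + cj + ek`. -/
def quaternionMatrix (a b c e : R) : Matrix (Fin 4) (Fin 4) R :=
  !![a, b, c, e; -b, a, -e, c; -c, e, a, -b; -e, -c, b, a]

theorem quaternionMatrix_mul_transpose (a b c e : R) :
    quaternionMatrix a b c e * (quaternionMatrix a b c e)ᵀ =
      (a ^ 2 + b ^ 2 + c ^ 2 + e ^ 2) • 1 := by
  ext i j
  fin_cases i <;> fin_cases j <;>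
    simp [quaternionMatrix, mul_apply, Fin.sum_univ_four] <;> ring

variable {ι κ : Type*} [Fintype ι] [Fintype κ] [DecidableEq ι] [DecidableEq κ] {N : R}

theorem reindex_mul_transpose_eq_smul_one {A : Matrix ι ι R} (hA : A * Aᵀ = N • 1)
    (e : ι ≃ κ) : reindex e e A * (reindex e e A)ᵀ = N • 1 := by
  rw [transpose_reindex, reindex_apply, reindex_apply, submatrix_mul_equiv, hA]
  ext i j
  simp [one_apply]

theorem kronecker_one_mul_transpose {A : Matrix ι ι R} (hA : A * Aᵀ = N • 1) :
    A ⊗ₖ (1 : Matrix κ κ R) * (A ⊗ₖ (1 : Matrix κ κ R))ᵀ = N • 1 := by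
  rw [← kroneckerMap_transpose, transpose_one, ← mul_kronecker_mul, hA, mul_one,
    smul_kronecker, one_kronecker_one]

theorem exists_mul_transpose_eq_smul_one_of_four_dvd {n : ℕ} (hn : 4 ∣ n) :
    ∃ A : Matrix (Fin n) (Fin n) R, A * Aᵀ = (n : R) • 1 := by
  obtain ⟨k, rfl⟩ := hn
  obtain ⟨a, b, c, e, habce⟩ := Nat.sum_four_squares (4 * k)
  have hM := quaternionMatrix_mul_transpose (a : R) b c e
  have hN : ((4 * k : ℕ) : R) = (a : R) ^ 2 + b ^ 2 + c ^ 2 + e ^ 2 := by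
    rw [← habce]; push_cast; ring
  rw [hN]
  exact ⟨reindex finProdFinEquiv finProdFinEquiv
      (quaternionMatrix (a : R) b c e ⊗ₖ (1 : Matrix (Fin k) (Fin k) R)),
    reindex_mul_transpose_eq_smul_one (kronecker_one_mul_transpose hM) _⟩

end CommRing

end Matrix

variable {K : Type*} [Field K]

theorem Matrix.transpose_mul_self_eq_smul_one {ι : Type*} [Fintype ι] [DecidableEq ι] {N : K}
    (hN : N ≠ 0) {A : Matrix ι ι K} (hA : A * Aᵀ = N • 1) : Aᵀ * A = N • 1 := by
  have hinv : A * (N⁻¹ • Aᵀ) = 1 := by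
    rw [Matrix.mul_smul, hA, smul_smul, inv_mul_cancel₀ hN, one_smul]
  calc Aᵀ * A = N • ((N⁻¹ • Aᵀ) * A) := by rw [smul_mul, smul_smul, mul_inv_cancel₀ hN, one_smul]
    _ = N • 1 := by rw [mul_eq_one_comm.mp hinv]

section Reflection

variable {ι : Type*} [Fintype ι]

def reflect (u x : ι → K) : ι → K := x - (2 * (x ⬝ᵥ u) / (u ⬝ᵥ u)) • u

theorem reflect_dotProduct_reflect {u : ι → K} (hu : u ⬝ᵥ u ≠ 0) (x y : ι → K) :
    reflect u x ⬝ᵥ reflect u y = x ⬝ᵥ y := by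
  simp only [reflect, sub_dotProduct, dotProduct_sub, smul_dotProduct, dotProduct_smul,
    smul_eq_mul, dotProduct_comm u y]
  field_simp
  ring

variable [LinearOrder K] [IsStrictOrderedRing K]

theorem reflect_sub_self {a b : ι → K} (hab : a ≠ b) (h : a ⬝ᵥ a = b ⬝ᵥ b) :
    reflect (a - b) a = b := by
  have hu : (a - b) ⬝ᵥ (a - b) ≠ 0 := mt dotProduct_self_eq_zero.mp (sub_ne_zero.mpr hab)
  have h2 : (a - b) ⬝ᵥ (a - b) = 2 * (a ⬝ᵥ (a - b)) := by
    simp only [sub_dotProduct, dotProduct_sub, h, dotProduct_comm b a]; ring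
  rw [reflect, h2, div_self (h2 ▸ hu), one_smul, sub_sub_cancel]

theorem Matrix.exists_mul_transpose_eq_smul_one_row_eq [DecidableEq ι] {N : K}
    {A : Matrix ι ι K} (hA : A * Aᵀ = N • 1) (i₀ : ι) {w : ι → K} (hw : w ⬝ᵥ w = N) :
    ∃ B : Matrix ι ι K, B * Bᵀ = N • 1 ∧ B i₀ = w := by
  by_cases h : A i₀ = w
  · exact ⟨A, hA, h⟩
  have hAA (i j : ι) : A i ⬝ᵥ A j = (N • 1 : Matrix ι ι K) i j := by rw [← hA]; rfl
  refine ⟨of fun i => reflect (A i₀ - w) (A i), ?_, reflect_sub_self h ?_⟩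
  · ext i j
    rw [← hAA]
    exact reflect_dotProduct_reflect (mt dotProduct_self_eq_zero.mp (sub_ne_zero.mpr h)) _ _
  · simpa [hw] using hAA i₀ i₀

end Reflection

theorem sum_sub_sq_eq_dotProduct {ι : Type*} [Fintype ι] (x y : ι → K) :
    ∑ k, (x k - y k) ^ 2 = (x - y) ⬝ᵥ (x - y) := by
  simp [dotProduct, sq]

theorem sum_sq_sub_smul {ι : Type*} [Fintype ι] (c : K) (x y : ι → K) :
    ∑ k, ((c • x) k - (c • y) k) ^ 2 = c ^ 2 * ∑ k, (x k - y k) ^ 2 := by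
  simp only [Finset.mul_sum, Pi.smul_apply, smul_eq_mul]
  exact Finset.sum_congr rfl fun _ _ => by ring

theorem dotProduct_eq_half_of_sub [NeZero (2 : K)] {ι : Type*} [Fintype ι] {a b : ι → K}
    {m : K} (ha : a ⬝ᵥ a = m) (hb : b ⬝ᵥ b = m) (hab : (a - b) ⬝ᵥ (a - b) = m) :
    a ⬝ᵥ b = m / 2 := by
  simp only [sub_dotProduct, dotProduct_sub, ha, hb, dotProduct_comm b a] at hab
  exact eq_div_of_mul_eq two_ne_zero (by linear_combination -hab)

def edgeMatrix {d n : ℕ} (v : Fin (d + 1) → Fin n → K) : Matrix (Fin n) (Fin d) K :=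
  of fun i j => v j.succ i - v 0 i

theorem edgeMatrix_transpose_mul_self [NeZero (2 : K)] {d n : ℕ} {m : K}
    {v : Fin (d + 1) → Fin n → K} (hv : ∀ i j, i ≠ j → ∑ k, (v i k - v j k) ^ 2 = m) :
    (edgeMatrix v)ᵀ * edgeMatrix v = (m / 2) • (1 + of fun _ _ => 1) := by
  simp only [sum_sub_sq_eq_dotProduct] at hv
  ext j j'
  have hentry : ((edgeMatrix v)ᵀ * edgeMatrix v) j j' =
      (v j.succ - v 0) ⬝ᵥ (v j'.succ - v 0) := rfl
  rw [hentry]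
  rcases eq_or_ne j j' with rfl | hjj'
  · simp [hv _ _ (Fin.succ_ne_zero j)]
    field_simp
    ring
  · have hedge := hv _ _ (Fin.succ_injective _ |>.ne hjj')
    rw [← sub_sub_sub_cancel_right _ _ (v 0)] at hedge
    simp [hjj', dotProduct_eq_half_of_sub (hv _ _ (Fin.succ_ne_zero j))
      (hv _ _ (Fin.succ_ne_zero j')) hedge]

theorem det_smul_one_add_ones (d : ℕ) (c : K) :
    ((c • (1 + of fun _ _ => 1)) : Matrix (Fin d) (Fin d) K).det = c ^ d * (d + 1) := by
  have hJ : (of fun _ _ => 1 : Matrix (Fin d) (Fin d) K) =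
      replicateCol Unit (fun _ => (1 : K)) * replicateRow Unit (fun _ => (1 : K)) := by
    ext; simp [mul_apply]
  rw [det_smul, hJ, det_one_add_replicateCol_mul_replicateRow]
  simp [dotProduct, add_comm]

theorem det_edgeMatrix_sq [NeZero (2 : K)] {d : ℕ} {m : K} {v : Fin (d + 1) → Fin d → K}
    (hv : ∀ i j, i ≠ j → ∑ k, (v i k - v j k) ^ 2 = m) :
    (edgeMatrix v).det ^ 2 = (m / 2) ^ d * (d + 1) := by
  rw [← det_smul_one_add_ones, ← edgeMatrix_transpose_mul_self hv, det_mul, det_transpose, sq]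

theorem affineIndependent_iff_det_edgeMatrix_ne_zero {d : ℕ} (v : Fin (d + 1) → Fin d → K) :
    AffineIndependent K v ↔ (edgeMatrix v).det ≠ 0 := by
  rw [affineIndependent_iff_linearIndependent_vsub K v 0,
    ← linearIndependent_equiv (finSuccAboveEquiv 0), ← det_transpose, ← isUnit_iff_ne_zero,
    ← isUnit_iff_isUnit_det, ← linearIndependent_rows_iff_isUnit]
  rfl

theorem Matrix.sum_sq_sub_succ_eq_of_mul_transpose {d : ℕ} {N : K}
    {C : Matrix (Fin (d + 1)) (Fin (d + 1)) K} (hC : C * Cᵀ = N • 1)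
    (hC0 : ∀ j j', C j 0 = C j' 0) {j j' : Fin (d + 1)} (hjj' : j ≠ j') :
    ∑ i : Fin d, (C j i.succ - C j' i.succ) ^ 2 = 2 * N := by
  have hrow (i i') : C i ⬝ᵥ C i' = (N • 1 : Matrix _ _ K) i i' := by rw [← hC]; rfl
  have hfull : ∑ i, (C j i - C j' i) ^ 2 = 2 * N := by
    simp only [sum_sub_sq_eq_dotProduct, sub_dotProduct, dotProduct_sub, hrow]
    simp [hjj', hjj'.symm]
    ring
  rwa [Fin.sum_univ_succ, hC0 j j', sub_self, sq, mul_zero, zero_add] at hfull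

theorem exists_sum_sq_sub_eq_of_four_dvd [LinearOrder K] [IsStrictOrderedRing K] {d : ℕ}
    (hd : 4 ∣ d + 1) :
    ∃ v : Fin (d + 1) → Fin d → K, ∀ i j, i ≠ j → ∑ k, (v i k - v j k) ^ 2 = 2 * (d + 1) := by
  obtain ⟨A, hA⟩ := exists_mul_transpose_eq_smul_one_of_four_dvd (R := K) hd
  obtain ⟨B, hB, hB0⟩ := exists_mul_transpose_eq_smul_one_row_eq hA 0 (w := fun _ => 1)
    (by simp [dotProduct])
  have hC := transpose_mul_self_eq_smul_one (by positivity) hB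
  push_cast at hC
  refine ⟨fun j i => Bᵀ j i.succ, fun j j' hjj' => ?_⟩
  exact sum_sq_sub_succ_eq_of_mul_transpose (by rwa [transpose_transpose]) (by simp [hB0]) hjj'

theorem exists_eq_mul_sq_of_sq_eq_pow_odd_mul {x c s u : K} {t : ℕ} (hx : x ≠ 0)
    (h : x ^ 2 = c ^ (2 * t + 1) * (s * u ^ 2)) : ∃ q, q ≠ 0 ∧ c = s * q ^ 2 := by
  obtain ⟨hc, hs, hu⟩ : c ≠ 0 ∧ s ≠ 0 ∧ u ≠ 0 := by
    have hrhs : c ^ (2 * t + 1) * (s * u ^ 2) ≠ 0 := h ▸ pow_ne_zero 2 hx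
    simpa using hrhs
  refine ⟨x / (c ^ t * u * s), by simp [*], ?_⟩
  rw [div_pow, h, pow_succ, pow_mul']
  field_simp

theorem codim_zero_three_mod_four_general (d : ℕ) (hd : d % 4 = 3) (s u : ℕ)
    (hsu : d + 1 = s * u ^ 2) (m : ℚ) :
    (∃ v : Fin (d + 1) → Fin d → ℚ, IsRegularSimplex d d m v) ↔
      ∃ q : ℚ, q ≠ 0 ∧ m = 2 * s * q ^ 2 := by
  have hsu' : (d + 1 : ℚ) = s * u ^ 2 := by exact_mod_cast hsu
  constructor
  · rintro ⟨v, hindep, hv⟩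
    have hdet := det_edgeMatrix_sq hv
    rw [hsu', show (m / 2) ^ d = (m / 2) ^ (2 * (d / 2) + 1) by congr 1; omega] at hdet
    obtain ⟨q, hq, hmq⟩ := exists_eq_mul_sq_of_sq_eq_pow_odd_mul
      ((affineIndependent_iff_det_edgeMatrix_ne_zero v).mp hindep) hdet
    exact ⟨q, hq, by linear_combination 2 * hmq⟩
  · rintro ⟨q, hq, rfl⟩
    have hs : (s : ℚ) ≠ 0 := Nat.cast_ne_zero.mpr (by rintro rfl; simp at hsu)
    have hu : (u : ℚ) ≠ 0 := Nat.cast_ne_zero.mpr (by rintro rfl; simp at hsu)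
    obtain ⟨v, hv⟩ := exists_sum_sq_sub_eq_of_four_dvd (K := ℚ) (by omega : 4 ∣ d + 1)
    set w : Fin (d + 1) → Fin d → ℚ := fun i => (q / u) • v i
    have hw (i j : Fin (d + 1)) (hij : i ≠ j) : ∑ k, (w i k - w j k) ^ 2 = 2 * s * q ^ 2 := by
      rw [sum_sq_sub_smul, hv i j hij, hsu']
      field_simp
    refine ⟨w, ?_, hw⟩
    rw [affineIndependent_iff_det_edgeMatrix_ne_zero, ← pow_ne_zero_iff two_ne_zero,
      det_edgeMatrix_sq hw, hsu']
    simp [*]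

/-- For `d ≡ 3 (mod 4)` with `s` the squarefree part of `d + 1`, the squared edge
lengths of regular `d`-simplices in `ℚ^d` are exactly `2s(ℚ^×)²`. -/
theorem codim_zero_three_mod_four (d : ℕ) (hd : d % 4 = 3) (s u : ℕ)
    (hs : Squarefree s) (hsu : d + 1 = s * u ^ 2) (m : ℚ) :
    (∃ v : Fin (d + 1) → Fin d → ℚ, IsRegularSimplex d d m v) ↔
      ∃ q : ℚ, q ≠ 0 ∧ m = 2 * s * q ^ 2 :=
  codim_zero_three_mod_four_general d hd s u hsu m
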